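/- Let A, B be linear operators on an inner product space with adjoints A*, B* (on a common invariant domain of smooth functions). Then 2 Re ⟨A*A f, B*B f⟩ = 2 Re ⟨[A, B*] B f, A f⟩ - ‖[A,B] f‖² + ‖B A f‖² + ‖A B f‖² for all f in the domain. -/

import Mathlib

open Complex

/-- Abstract operator identity (identity (3.4) of the paper, single pair of operators):
if `A, B` are linear operators on a complex inner product space with formal adjoints
`A*, B*` on a common domain (here: everywhere defined), then
`2 Re⟨A*A f, B*B f⟩ = 2 Re⟨[A,B*] B f, A f⟩ - ‖[A,B] f‖² + ‖BA f‖² + ‖AB f‖²`. -/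
theorem operator_square_identity
    {E : Type*} [NormedAddCommGroup E] [InnerProductSpace ℂ E]
    (A B Astar Bstar : E →ₗ[ℂ] E)
    (hA : ∀ u w : E, inner ℂ (A u) w = (inner ℂ u (Astar w) : ℂ))
    (hB : ∀ u w : E, inner ℂ (B u) w = (inner ℂ u (Bstar w) : ℂ))
    (f : E) :
    2 * (inner ℂ (Astar (A f)) (Bstar (B f)) : ℂ).re
      = 2 * (inner ℂ (A (Bstar (B f)) - Bstar (A (B f))) (A f) : ℂ).re
        - ‖A (B f) - B (A f)‖ ^ 2 + ‖B (A f)‖ ^ 2 + ‖A (B f)‖ ^ 2 := by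
  have h1 : (inner ℂ (Astar (A f)) (Bstar (B f)) : ℂ).re
      = (inner ℂ (A (Bstar (B f))) (A f) : ℂ).re := by
    have e : (inner ℂ (A (Bstar (B f))) (A f) : ℂ) = inner ℂ (Bstar (B f)) (Astar (A f)) :=
      hA _ _
    rw [e, ← inner_conj_symm, Complex.conj_re]
  have h2 : (inner ℂ (Bstar (A (B f))) (A f) : ℂ).re
      = (inner ℂ (B (A f)) (A (B f)) : ℂ).re := by
    have e : (inner ℂ (B (A f)) (A (B f)) : ℂ) = inner ℂ (A f) (Bstar (A (B f))) := hB _ _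
    rw [e, ← inner_conj_symm, Complex.conj_re]
  have hsub : (inner ℂ (A (Bstar (B f)) - Bstar (A (B f))) (A f) : ℂ)
      = inner ℂ (A (Bstar (B f))) (A f) - inner ℂ (Bstar (A (B f))) (A f) := by
    rw [inner_sub_left]
  have hns : ‖A (B f) - B (A f)‖ ^ 2
      = ‖A (B f)‖ ^ 2 - 2 * (inner ℂ (A (B f)) (B (A f)) : ℂ).re + ‖B (A f)‖ ^ 2 :=
    @norm_sub_sq ℂ _ _ _ _ _ _
  have hswap : (inner ℂ (A (B f)) (B (A f)) : ℂ).re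
      = (inner ℂ (B (A f)) (A (B f)) : ℂ).re := by
    rw [← inner_conj_symm, Complex.conj_re]
  rw [hsub, Complex.sub_re, hns, h1, h2, hswap]
  ring
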